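/- arXiv:1211.6555 — 2 statements merged into one kernel-verified Lean document; each statement's English description precedes it below -/
import Mathlib

section
/- Let H be the connected graph on n vertices that is the union of the complete graph K_m on vertices v_{α_1},…,v_{α_m} (1 ≤ α_1 < α_2 < … < α_m = n, m < n) and m star graphs, one centered at each vertex v_{α_i} of K_m, each star having at least one leaf, the stars being pairwise vertex-disjoint and meeting K_m only in their centers, with the leaves of the stars being exactly the n − m vertices outside K_m. Then the ideal of vertex covers I_c(H) has exactly m + 1 minimal monomial squarefree generators, namely: the monomial X_{α_1}X_{α_2}⋯X_{α_m} (the product over all K_m-vertices), together with, for each i = 1,…,m, the monomial (∏_{l≠i} X_{α_l})·(∏_{w a leaf of the star centered at v_{α_i}} X_w). -/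
/-!
A monomial lies in `I_c(G)` exactly when its support is a vertex cover, so the minimal monomial
generators of `I_c(G)` are the products of the variables over the minimal vertex covers.
In `H`, a cover that misses a clique vertex `α i` must contain the other clique vertices and every
leaf of the star at `α i`; so every cover contains either the clique or one of the `m` sets
`starCover α f i`. These `m + 1` covers form an antichain (each star has a leaf outside the
clique), hence they are precisely the minimal vertex covers.
-/

open MvPolynomial Finset

/-- A set of vertices is a vertex cover if it meets every edge. -/
def IsVertexCover {V : Type*} (G : SimpleGraph V) (C : Set V) : Prop :=
  ∀ ⦃u v : V⦄, G.Adj u v → u ∈ C ∨ v ∈ C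

/-- The ideal of vertex covers of a graph on `Fin n`. -/
noncomputable def coverIdeal (K : Type*) [Field K] {n : ℕ} (G : SimpleGraph (Fin n)) :
    Ideal (MvPolynomial (Fin n) K) :=
  Ideal.span { p | ∃ C : Finset (Fin n), IsVertexCover G ↑C ∧ p = ∏ i ∈ C, X i }

/-- The edge ideal of a graph on `Fin n`. -/
noncomputable def edgeIdeal (K : Type*) [Field K] {n : ℕ} (G : SimpleGraph (Fin n)) :
    Ideal (MvPolynomial (Fin n) K) :=
  Ideal.span { p | ∃ u v : Fin n, G.Adj u v ∧ p = X u * X v }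

/-- `p` is a minimal monomial generator of the monomial ideal `I`:
it is a monomial in `I` none of whose proper monomial divisors lies in `I`. -/
def IsMinimalMonomialGen {K : Type*} [Field K] {n : ℕ}
    (I : Ideal (MvPolynomial (Fin n) K)) (p : MvPolynomial (Fin n) K) : Prop :=
  ∃ a : Fin n →₀ ℕ, p = monomial a (1 : K) ∧ p ∈ I ∧
    ∀ b : Fin n →₀ ℕ, b ≤ a → b ≠ a → monomial b (1 : K) ∉ I

/-- The maximal graded ideal (X_1, …, X_n) of the polynomial ring. -/
noncomputable def gradedMaxIdeal (K : Type*) [Field K] (n : ℕ) :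
    Ideal (MvPolynomial (Fin n) K) :=
  Ideal.span (Set.range X)

/-- The set of lengths of regular sequences on `R/I` consisting of elements of the
maximal graded ideal; its greatest element is the depth of `R/I`. -/
def depthSet (K : Type*) [Field K] {n : ℕ} (I : Ideal (MvPolynomial (Fin n) K)) : Set ℕ :=
  {k | ∃ rs : List (MvPolynomial (Fin n) K), rs.length = k ∧
    (∀ r ∈ rs, r ∈ gradedMaxIdeal K n) ∧
    RingTheory.Sequence.IsRegular (MvPolynomial (Fin n) K ⧸ I) rs}

/-- A minimal graded free resolution of `R/I`:
`⋯ → F₂ → F₁ → F₀ = R → R/I → 0`, where `F_{j+1}` is free of rank `rk j` with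
generator degrees `dgr j`, the map `F₁ → R` is given by the row `g` (whose image is `I`),
and the map `F_{j+2} → F_{j+1}` is given by the matrix `M j`.  All matrix entries are
homogeneous of the appropriate degree and lie in the maximal graded ideal (minimality),
and the complex is exact at every `F_{j}`, `j ≥ 1`. -/
def IsMinimalGradedFreeResolution {K : Type*} [Field K] {n : ℕ}
    (I : Ideal (MvPolynomial (Fin n) K))
    (rk : ℕ → ℕ) (dgr : ∀ j : ℕ, Fin (rk j) → ℕ)
    (g : Fin (rk 0) → MvPolynomial (Fin n) K)
    (M : ∀ j : ℕ, Matrix (Fin (rk j)) (Fin (rk (j + 1))) (MvPolynomial (Fin n) K)) : Prop :=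
  Ideal.span (Set.range g) = I ∧
  (∀ i, (g i).IsHomogeneous (dgr 0 i)) ∧
  (∀ i, constantCoeff (g i) = 0) ∧
  (∀ (j : ℕ) (k : Fin (rk j)) (i : Fin (rk (j + 1))),
      (M j k i).IsHomogeneous (dgr (j + 1) i - dgr j k)) ∧
  (∀ (j : ℕ) (k : Fin (rk j)) (i : Fin (rk (j + 1))),
      dgr (j + 1) i ≤ dgr j k → M j k i = 0) ∧
  LinearMap.ker (Fintype.linearCombination (MvPolynomial (Fin n) K) g)
    = LinearMap.range (M 0).mulVecLin ∧
  (∀ j : ℕ, LinearMap.ker (M j).mulVecLin = LinearMap.range (M (j + 1)).mulVecLin)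

attribute [local instance] Classical.propDecidable

section SquarefreeMonomial

variable {σ R : Type*}

noncomputable def squarefreeExponent (s : Finset σ) : σ →₀ ℕ :=
  ∑ i ∈ s, Finsupp.single i 1

lemma squarefreeExponent_apply (s : Finset σ) (i : σ) :
    squarefreeExponent s i = if i ∈ s then 1 else 0 := by
  simp [squarefreeExponent, Finsupp.finsetSum_apply, Finsupp.single_apply]

@[simp]
lemma support_squarefreeExponent (s : Finset σ) : (squarefreeExponent s).support = s := by
  ext i
  simp [squarefreeExponent_apply]

lemma squarefreeExponent_le_iff {s : Finset σ} {b : σ →₀ ℕ} :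
    squarefreeExponent s ≤ b ↔ s ⊆ b.support := by
  refine ⟨fun h => support_squarefreeExponent s ▸ Finsupp.support_mono h, fun h i => ?_⟩
  rw [squarefreeExponent_apply]
  split_ifs with hi
  · exact Nat.one_le_iff_ne_zero.2 (Finsupp.mem_support_iff.1 (h hi))
  · exact Nat.zero_le _

lemma squarefreeExponent_support_of_le {s : Finset σ} {b : σ →₀ ℕ}
    (h : b ≤ squarefreeExponent s) : squarefreeExponent b.support = b := by
  ext i
  have hi := h i
  rw [squarefreeExponent_apply] at hi ⊢
  simp only [Finsupp.mem_support_iff]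
  split_ifs at hi ⊢ <;> omega

variable [CommSemiring R]

lemma prod_X_eq_monomial_squarefreeExponent (s : Finset σ) :
    ∏ i ∈ s, (X i : MvPolynomial σ R) = monomial (squarefreeExponent s) 1 := by
  rw [squarefreeExponent, monomial_sum_one]
  rfl

lemma prod_X_injective [Nontrivial R] :
    Function.Injective fun s : Finset σ => ∏ i ∈ s, (X i : MvPolynomial σ R) := by
  intro s t h
  simp only [prod_X_eq_monomial_squarefreeExponent] at h
  simpa using congrArg Finsupp.support (monomial_left_injective one_ne_zero h)

end SquarefreeMonomial

lemma IsVertexCover.mono {V : Type*} {G : SimpleGraph V} {C D : Set V}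
    (hC : IsVertexCover G C) (hCD : C ⊆ D) : IsVertexCover G D :=
  fun _ _ huv => (hC huv).imp (@hCD _) (@hCD _)

section CoverIdeal

variable {K : Type*} [Field K] {n : ℕ} {G : SimpleGraph (Fin n)}

lemma monomial_mem_coverIdeal_iff {b : Fin n →₀ ℕ} :
    monomial b (1 : K) ∈ coverIdeal K G ↔ IsVertexCover G ↑b.support := by
  have hspan : coverIdeal K G = Ideal.span ((fun s => monomial s (1 : K)) ''
      {s | ∃ C : Finset (Fin n), IsVertexCover G ↑C ∧ s = squarefreeExponent C}) := by
    simp only [coverIdeal, prod_X_eq_monomial_squarefreeExponent]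
    congr 1
    ext p
    simp [eq_comm]
  rw [hspan, mem_ideal_span_monomial_image, support_monomial, if_neg one_ne_zero]
  simp only [mem_singleton, forall_eq, Set.mem_ofPred_eq]
  constructor
  · rintro ⟨_, ⟨C, hC, rfl⟩, hCb⟩
    exact hC.mono (coe_subset.2 (squarefreeExponent_le_iff.1 hCb))
  · exact fun hb => ⟨_, ⟨b.support, hb, rfl⟩, squarefreeExponent_le_iff.2 subset_rfl⟩

lemma isMinimalMonomialGen_coverIdeal_iff {p : MvPolynomial (Fin n) K} :
    IsMinimalMonomialGen (coverIdeal K G) p ↔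
      ∃ C : Finset (Fin n), Minimal (fun C : Finset (Fin n) => IsVertexCover G ↑C) C ∧
        p = ∏ i ∈ C, X i := by
  constructor
  · rintro ⟨a, rfl, hmem, hmin⟩
    rw [monomial_mem_coverIdeal_iff] at hmem
    have ha : squarefreeExponent a.support = a := by
      by_contra hne
      refine hmin _ (squarefreeExponent_le_iff.2 subset_rfl) hne ?_
      rwa [monomial_mem_coverIdeal_iff, support_squarefreeExponent]
    refine ⟨a.support, ⟨hmem, fun D hD hDa => ?_⟩,
      by rw [prod_X_eq_monomial_squarefreeExponent, ha]⟩
    by_contra hne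
    refine hmin _ (squarefreeExponent_le_iff.2 hDa) (fun h => hne ?_) ?_
    · rw [← h, support_squarefreeExponent]
    · rwa [monomial_mem_coverIdeal_iff, support_squarefreeExponent]
  · rintro ⟨C, hC, rfl⟩
    refine ⟨squarefreeExponent C, prod_X_eq_monomial_squarefreeExponent C, ?_,
      fun b hb hne hmem => hne ?_⟩
    · rw [prod_X_eq_monomial_squarefreeExponent, monomial_mem_coverIdeal_iff,
        support_squarefreeExponent]
      exact hC.prop
    · rw [monomial_mem_coverIdeal_iff] at hmem
      have hsub : b.support ⊆ C := support_squarefreeExponent C ▸ Finsupp.support_mono hb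
      rw [← squarefreeExponent_support_of_le hb, hC.eq_of_le hmem hsub]

end CoverIdeal

section CliqueWithStars

variable {n m : ℕ} (α : Fin m → Fin n) (f : Fin n → Fin n)

def IsCliqueWithStars (H : SimpleGraph (Fin n)) : Prop :=
  ∀ u v : Fin n, H.Adj u v ↔
    (∃ i j : Fin m, i ≠ j ∧ u = α i ∧ v = α j) ∨
    (u ∉ Set.range α ∧ v = f u) ∨ (v ∉ Set.range α ∧ u = f v)

def starLeaves (i : Fin m) : Finset (Fin n) :=
  univ.filter fun w : Fin n => w ∉ Set.range α ∧ f w = α i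

def starCover (i : Fin m) : Finset (Fin n) :=
  (univ.erase i).image α ∪ starLeaves α f i

def cliqueStarCovers : Finset (Finset (Fin n)) :=
  insert (univ.image α) (univ.image (starCover α f))

variable {α f}

lemma mem_starLeaves {i : Fin m} {w : Fin n} :
    w ∈ starLeaves α f i ↔ w ∉ Set.range α ∧ f w = α i := by
  simp [starLeaves]

lemma apply_mem_starCover_iff (hα : Function.Injective α) {i j : Fin m} :
    α j ∈ starCover α f i ↔ j ≠ i := by
  simp [starCover, mem_starLeaves, hα.eq_iff]

lemma apply_notMem_starCover (hα : Function.Injective α) (i : Fin m) :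
    α i ∉ starCover α f i :=
  fun h => (apply_mem_starCover_iff hα).1 h rfl

lemma mem_starCover_of_notMem_range {i : Fin m} {w : Fin n} (hw : w ∉ Set.range α) :
    w ∈ starCover α f i ↔ f w = α i := by
  simp only [starCover, mem_union, mem_starLeaves, hw, not_false_eq_true, true_and,
    or_iff_right_iff_imp, mem_image]
  rintro ⟨j, -, rfl⟩
  exact absurd ⟨j, rfl⟩ hw

lemma prod_X_starCover {R : Type*} [CommSemiring R] (hα : Function.Injective α) (i : Fin m) :
    ∏ w ∈ starCover α f i, (X w : MvPolynomial (Fin n) R) =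
      (∏ l ∈ univ.erase i, X (α l)) * ∏ w ∈ starLeaves α f i, X w := by
  have hdisj : Disjoint ((univ.erase i).image α) (starLeaves α f i) := by
    rw [disjoint_left]
    rintro _ hw hleaf
    obtain ⟨j, -, rfl⟩ := mem_image.1 hw
    exact (mem_starLeaves.1 hleaf).1 ⟨j, rfl⟩
  rw [starCover, prod_union hdisj, prod_image hα.injOn]

variable {H : SimpleGraph (Fin n)}

lemma isVertexCover_image (hf : ∀ v : Fin n, v ∉ Set.range α → ∃ i : Fin m, f v = α i)
    (hH : IsCliqueWithStars α f H) : IsVertexCover H ↑(univ.image α) := by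
  intro u v huv
  rcases (hH u v).1 huv with ⟨i, -, -, rfl, -⟩ | ⟨hu, rfl⟩ | ⟨hv, rfl⟩
  · simp
  · obtain ⟨i, hi⟩ := hf u hu
    simp [hi]
  · obtain ⟨i, hi⟩ := hf v hv
    simp [hi]

lemma isVertexCover_starCover (hα : Function.Injective α)
    (hf : ∀ v : Fin n, v ∉ Set.range α → ∃ i : Fin m, f v = α i)
    (hH : IsCliqueWithStars α f H) (i : Fin m) : IsVertexCover H ↑(starCover α f i) := by
  intro u v huv
  simp only [mem_coe]
  rcases (hH u v).1 huv with ⟨j, k, hjk, rfl, rfl⟩ | ⟨hu, rfl⟩ | ⟨hv, rfl⟩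
  · simp only [apply_mem_starCover_iff hα]
    grind
  · obtain ⟨j, hj⟩ := hf u hu
    rw [mem_starCover_of_notMem_range hu, hj, apply_mem_starCover_iff hα, hα.eq_iff]
    grind
  · obtain ⟨j, hj⟩ := hf v hv
    rw [mem_starCover_of_notMem_range hv, hj, apply_mem_starCover_iff hα, hα.eq_iff]
    grind

lemma image_subset_or_exists_starCover_subset (hH : IsCliqueWithStars α f H)
    {C : Finset (Fin n)} (hC : IsVertexCover H ↑C) :
    univ.image α ⊆ C ∨ ∃ i, starCover α f i ⊆ C := by
  by_cases hall : ∀ i, α i ∈ C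
  · left
    simpa [image_subset_iff] using hall
  obtain ⟨i, hi⟩ := not_forall.1 hall
  refine Or.inr ⟨i, fun w hw => (hC (?_ : H.Adj w (α i))).resolve_right hi⟩
  rcases mem_union.1 hw with hw | hw
  · obtain ⟨j, hj, rfl⟩ := mem_image.1 hw
    exact (hH _ _).2 (Or.inl ⟨j, i, ne_of_mem_erase hj, rfl, rfl⟩)
  · obtain ⟨hw, hfw⟩ := mem_starLeaves.1 hw
    exact (hH _ _).2 (Or.inr (Or.inl ⟨hw, hfw.symm⟩))

lemma isAntichain_cliqueStarCovers (hα : Function.Injective α)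
    (hstar : ∀ i : Fin m, ∃ v : Fin n, v ∉ Set.range α ∧ f v = α i) :
    IsAntichain (· ≤ ·) (↑(cliqueStarCovers α f) : Set (Finset (Fin n))) := by
  rw [cliqueStarCovers, coe_insert, coe_image, coe_univ, Set.image_univ]
  refine IsAntichain.insert ?_ ?_ ?_
  · rintro _ ⟨i, rfl⟩ _ ⟨j, rfl⟩ hne hij
    have hji : j ≠ i := fun h => hne (h ▸ rfl)
    exact apply_notMem_starCover hα j (hij ((apply_mem_starCover_iff hα).2 hji))
  · rintro _ ⟨i, rfl⟩ - hsub
    obtain ⟨w, hw, hfw⟩ := hstar i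
    obtain ⟨j, -, rfl⟩ := mem_image.1 (hsub ((mem_starCover_of_notMem_range hw).2 hfw))
    exact hw ⟨j, rfl⟩
  · rintro _ ⟨i, rfl⟩ - hsub
    exact apply_notMem_starCover hα i (hsub (mem_image_of_mem α (mem_univ i)))

lemma card_cliqueStarCovers (hα : Function.Injective α) :
    (cliqueStarCovers α f).card = m + 1 := by
  have hinj : Function.Injective (starCover α f) := fun i j h => by
    by_contra hij
    exact apply_notMem_starCover hα j (h ▸ (apply_mem_starCover_iff hα).2 (Ne.symm hij))
  have hnotMem : univ.image α ∉ univ.image (starCover α f) := by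
    intro h
    obtain ⟨i, -, hi⟩ := mem_image.1 h
    exact apply_notMem_starCover hα i (hi ▸ mem_image_of_mem α (mem_univ i))
  rw [cliqueStarCovers, card_insert_of_notMem hnotMem, card_image_of_injective _ hinj,
    card_univ, Fintype.card_fin]

lemma minimal_isVertexCover_iff (hα : Function.Injective α)
    (hf : ∀ v : Fin n, v ∉ Set.range α → ∃ i : Fin m, f v = α i)
    (hstar : ∀ i : Fin m, ∃ v : Fin n, v ∉ Set.range α ∧ f v = α i)
    (hH : IsCliqueWithStars α f H) {C : Finset (Fin n)} :
    Minimal (fun C : Finset (Fin n) => IsVertexCover H ↑C) C ↔ C ∈ cliqueStarCovers α f := by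
  rw [minimal_iff_minimal_of_imp_of_forall
      (Q := (· ∈ (cliqueStarCovers α f : Set (Finset (Fin n))))),
    (isAntichain_cliqueStarCovers hα hstar).minimal_mem_iff, mem_coe]
  · intro D hD
    rcases mem_insert.1 hD with rfl | hD
    · exact isVertexCover_image hf hH
    · obtain ⟨i, -, rfl⟩ := mem_image.1 hD
      exact isVertexCover_starCover hα hf hH i
  · intro D hD
    rcases image_subset_or_exists_starCover_subset hH hD with hsub | ⟨i, hsub⟩
    · exact ⟨_, hsub, mem_insert_self _ _⟩
    · exact ⟨_, hsub, mem_insert_of_mem (mem_image_of_mem _ (mem_univ i))⟩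

end CliqueWithStars

/-- `H` is the union of the complete graph on the vertices `α 0 < α 1 < … < α (m-1)`
(with `α (m-1) = n-1` and `m < n`) and `m` stars, one centered at each vertex `α i`, each
with at least one leaf, whose leaves are exactly the `n - m` vertices outside the complete
graph (the outside vertex `v` being joined precisely to its center `f v`).  Then `I_c(H)`
has exactly `m + 1` minimal monomial squarefree generators, namely `∏_i X (α i)` together
with, for each `i`, the monomial `(∏_{l ≠ i} X (α l)) * ∏_{w leaf at α i} X w`. -/
theorem coverIdeal_gens_all_stars
    (n m : ℕ) (K : Type*) [Field K]
    (α : Fin m → Fin n) (hα : StrictMono α)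
    (f : Fin n → Fin n)
    (hf : ∀ v : Fin n, v ∉ Set.range α → ∃ i : Fin m, f v = α i)
    (hstar : ∀ i : Fin m, ∃ v : Fin n, v ∉ Set.range α ∧ f v = α i)
    (H : SimpleGraph (Fin n))
    (hH : ∀ u v : Fin n, H.Adj u v ↔
      (∃ i j : Fin m, i ≠ j ∧ u = α i ∧ v = α j) ∨
      (u ∉ Set.range α ∧ v = f u) ∨ (v ∉ Set.range α ∧ u = f v)) :
    ∃ S : Finset (MvPolynomial (Fin n) K),
      S = insert (∏ i : Fin m, X (α i))
          (Finset.univ.image fun i : Fin m =>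
            (∏ l ∈ Finset.univ.erase i, X (α l)) *
              ∏ w ∈ Finset.univ.filter (fun w : Fin n => w ∉ Set.range α ∧ f w = α i), X w) ∧
      {p | IsMinimalMonomialGen (coverIdeal K H) p} = ↑S ∧
      S.card = m + 1 := by
  have hαinj := hα.injective
  have hS : (cliqueStarCovers α f).image (fun C => ∏ w ∈ C, (X w : MvPolynomial (Fin n) K)) =
      insert (∏ i : Fin m, X (α i)) (univ.image fun i : Fin m =>
        (∏ l ∈ univ.erase i, X (α l)) * ∏ w ∈ starLeaves α f i, X w) := by
    simp only [cliqueStarCovers, image_insert, image_image, prod_image hαinj.injOn,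
      Function.comp_def, prod_X_starCover hαinj]
  refine ⟨_, hS, ?_, ?_⟩
  · ext p
    simp [isMinimalMonomialGen_coverIdeal_iff, minimal_isVertexCover_iff hαinj hf hstar hH,
      eq_comm]
  · rw [card_image_of_injective _ prod_X_injective, card_cliqueStarCovers hαinj]
end

section
/- Let H be the connected graph on n vertices that is the union of a complete graph K_m (m < n) and star graphs centered at vertices of K_m, each star meeting K_m only in its center, distinct stars being otherwise vertex-disjoint, and the leaves of the stars being exactly the n − m vertices outside K_m. Then the projective dimension of R/I_c(H) as an R-module equals 2. -/
open MvPolynomial Finset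

/-!
Every edge of `H` meets the clique `A`, so a vertex set covers `H` iff it contains `A`, or
contains `A \ {a}` and the leaves of `a` for some centre `a`. Hence `I_c(H)` is minimally
generated by `g₀ = X^A₀`, where `A₀` is `A` or `A \ {b}` for a centre `b` without leaves, and
by `g_a = X^(A \ {a} ∪ leaves a)` for `a ∈ A₀`. The variable `X_a` divides every generator
except `g_a`, and `X_a g_a` is a multiple of `g₀`. As `X_a` is prime, these `|A₀|` relations
form a basis of the syzygies, giving the minimal resolution
`0 → R^|A₀| → R^(|A₀|+1) → R → R/I_c(H) → 0`.
-/

/-- `rk j` is the rank of `F_{j+1}`, so this says that `R/I` has projective dimension `2`. -/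
def HasMinimalResolutionOfLengthTwo {K : Type*} [Field K] {n : ℕ}
    (I : Ideal (MvPolynomial (Fin n) K)) : Prop :=
  ∃ (rk : ℕ → ℕ) (dgr : ∀ j : ℕ, Fin (rk j) → ℕ)
    (g : Fin (rk 0) → MvPolynomial (Fin n) K)
    (M : ∀ j : ℕ, Matrix (Fin (rk j)) (Fin (rk (j + 1))) (MvPolynomial (Fin n) K)),
    IsMinimalGradedFreeResolution I rk dgr g M ∧ (∀ j : ℕ, 2 ≤ j → rk j = 0) ∧ rk 1 ≠ 0

section Syzygy

open Matrix

variable {R : Type*} [CommRing R] {k : ℕ}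

/-- Column `i` is the syzygy `x i • e (i + 1) - w i • e 0` of `Fin.cons g₀ g` when
`x i * g i = w i * g₀`. -/
def syzygyMatrix (w x : Fin k → R) : Matrix (Fin (k + 1)) (Fin k) R :=
  of (vecCons (-w) fun r => diagonal x r)

@[simp]
lemma syzygyMatrix_zero (w x : Fin k → R) (i : Fin k) : syzygyMatrix w x 0 i = -w i := rfl

@[simp]
lemma syzygyMatrix_succ (w x : Fin k → R) (r i : Fin k) :
    syzygyMatrix w x r.succ i = diagonal x r i := rfl

lemma syzygyMatrix_mulVec (w x q : Fin k → R) :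
    syzygyMatrix w x *ᵥ q = Fin.cons (-(w ⬝ᵥ q)) (x * q) := by
  rw [syzygyMatrix, cons_mulVec, neg_dotProduct]
  congr 1
  ext r
  exact mulVec_diagonal x q r

lemma linearCombination_cons (g₀ : R) (g : Fin k → R) (c : Fin (k + 1) → R) :
    Fintype.linearCombination R (Fin.cons g₀ g : Fin (k + 1) → R) c =
      c 0 * g₀ + ∑ i, c i.succ * g i := by
  simp [Fintype.linearCombination_apply, Fin.sum_univ_succ]

variable [IsDomain R] {g₀ : R} {g w x : Fin k → R}

theorem ker_linearCombination_cons_eq_range_syzygyMatrix (hg₀ : g₀ ≠ 0)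
    (hx : ∀ i, Prime (x i)) (hsyz : ∀ i, x i * g i = w i * g₀)
    (hndvd : ∀ i, ¬ x i ∣ g i) (hdvd₀ : ∀ i, x i ∣ g₀) (hdvd : ∀ i j, i ≠ j → x i ∣ g j) :
    LinearMap.ker (Fintype.linearCombination R (Fin.cons g₀ g : Fin (k + 1) → R)) =
      LinearMap.range (syzygyMatrix w x).mulVecLin := by
  have hsyz' : ∀ (q : Fin k → R) i, x i * q i * g i = q i * w i * g₀ := fun q i => by
    rw [mul_right_comm, hsyz]; ring
  apply le_antisymm
  · intro c hc
    rw [LinearMap.mem_ker, linearCombination_cons] at hc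
    have hxc : ∀ i, x i ∣ c i.succ := fun i => by
      rw [← Finset.add_sum_erase _ _ (Finset.mem_univ i), add_left_comm] at hc
      have hrest : x i ∣ c 0 * g₀ + ∑ j ∈ Finset.univ.erase i, c j.succ * g j :=
        dvd_add (dvd_mul_of_dvd_right (hdvd₀ i) _) <| Finset.dvd_sum fun j hj =>
          dvd_mul_of_dvd_right (hdvd i j (Finset.ne_of_mem_erase hj).symm) _
      have hxcg := (dvd_add_left hrest).mp (hc ▸ dvd_zero _)
      exact ((hx i).dvd_or_dvd hxcg).resolve_right (hndvd i)
    choose q hq using hxc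
    have hc₀ : c 0 = -(w ⬝ᵥ q) := by
      have hc₀g₀ : (c 0 + w ⬝ᵥ q) * g₀ = 0 := by
        rw [← hc, add_mul, dotProduct, Finset.sum_mul]
        congr 1
        exact Finset.sum_congr rfl fun i _ => by rw [hq, hsyz', mul_comm (w i)]
      exact eq_neg_of_add_eq_zero_left ((mul_eq_zero.mp hc₀g₀).resolve_right hg₀)
    refine ⟨q, ?_⟩
    rw [mulVecLin_apply, syzygyMatrix_mulVec]
    ext r
    induction r using Fin.cases with
    | zero => exact hc₀.symm
    | succ i => exact (hq i).symm
  · rintro _ ⟨q, rfl⟩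
    rw [LinearMap.mem_ker, mulVecLin_apply, syzygyMatrix_mulVec, linearCombination_cons]
    simp only [Fin.cons_zero, Fin.cons_succ, Pi.mul_apply, hsyz', dotProduct,
      ← Finset.sum_mul, mul_comm (q _)]
    ring

theorem ker_syzygyMatrix_mulVecLin_eq_bot (hx : ∀ i, x i ≠ 0) :
    LinearMap.ker (syzygyMatrix w x).mulVecLin = ⊥ := by
  rw [LinearMap.ker_eq_bot']
  intro q hq
  ext i
  have hqi := congrFun hq i.succ
  rw [mulVecLin_apply, syzygyMatrix_mulVec, Fin.cons_succ] at hqi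
  exact (mul_eq_zero.mp hqi).resolve_left (hx i)

end Syzygy

section Graded

lemma MvPolynomial.IsHomogeneous.constantCoeff_eq_zero {σ R : Type*} [CommSemiring R]
    {p : MvPolynomial σ R} {d : ℕ} (hp : p.IsHomogeneous d) (hd : d ≠ 0) :
    constantCoeff p = 0 := by
  rw [constantCoeff_eq]
  exact hp.coeff_eq_zero (by simpa using hd.symm)

variable {k d₀ : ℕ} {d e : Fin k → ℕ}

lemma syzygyMatrix_eq_zero_of_le {R : Type*} [CommRing R] {w x : Fin k → R}
    (hlt : ∀ i, d₀ < d i + 1) {r : Fin (k + 1)} {i : Fin k}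
    (hle : d i + 1 ≤ (Fin.cons d₀ d : Fin (k + 1) → ℕ) r) : syzygyMatrix w x r i = 0 := by
  induction r using Fin.cases with
  | zero => exact absurd hle (not_le.2 (hlt i))
  | succ r =>
    rw [Fin.cons_succ] at hle
    rw [syzygyMatrix_succ, Matrix.diagonal_apply_ne _ (by rintro rfl; omega)]

variable {K : Type*} [Field K] {n : ℕ}

lemma isHomogeneous_syzygyMatrix {w : Fin k → MvPolynomial (Fin n) K} {a : Fin k → Fin n}
    (hw : ∀ i, (w i).IsHomogeneous (e i)) (hdeg : ∀ i, 1 + d i = e i + d₀)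
    (r : Fin (k + 1)) (i : Fin k) :
    (syzygyMatrix w (fun i => X (a i)) r i).IsHomogeneous
      (d i + 1 - (Fin.cons d₀ d : Fin (k + 1) → ℕ) r) := by
  induction r using Fin.cases with
  | zero =>
    rw [syzygyMatrix_zero, Fin.cons_zero, show d i + 1 - d₀ = e i by have := hdeg i; omega]
    exact (hw i).neg
  | succ r =>
    rw [syzygyMatrix_succ, Fin.cons_succ, Matrix.diagonal_apply]
    split_ifs with hri
    · rw [hri, show d i + 1 - d i = 1 by omega]
      exact isHomogeneous_X K _
    · exact isHomogeneous_zero _ _ _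

theorem hasMinimalResolutionOfLengthTwo_of_syzygies {g₀ : MvPolynomial (Fin n) K}
    {g w : Fin k → MvPolynomial (Fin n) K} {a : Fin k → Fin n}
    (hk : k ≠ 0) (hd₀ : d₀ ≠ 0) (hg₀ : g₀.IsHomogeneous d₀) (hg₀_ne : g₀ ≠ 0)
    (hg : ∀ i, (g i).IsHomogeneous (d i)) (hw : ∀ i, (w i).IsHomogeneous (e i))
    (he : ∀ i, e i ≠ 0) (hsyz : ∀ i, X (a i) * g i = w i * g₀)
    (hndvd : ∀ i, ¬ X (a i) ∣ g i) (hdvd₀ : ∀ i, X (a i) ∣ g₀)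
    (hdvd : ∀ i j, i ≠ j → X (a i) ∣ g j) :
    HasMinimalResolutionOfLengthTwo
      (Ideal.span (Set.range (Fin.cons g₀ g : Fin (k + 1) → MvPolynomial (Fin n) K))) := by
  have hdeg : ∀ i, 1 + d i = e i + d₀ := fun i => by
    have hne : X (a i) * g i ≠ 0 := mul_ne_zero (X_ne_zero _) fun h => hndvd i (h ▸ dvd_zero _)
    refine ((isHomogeneous_X K (a i)).mul (hg i)).inj_right ?_ hne
    rw [hsyz]
    exact (hw i).mul hg₀
  have hd : ∀ i, d i ≠ 0 := fun i => by have := hdeg i; have := he i; omega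
  have hlt : ∀ i, d₀ < d i + 1 := fun i => by have := hdeg i; have := he i; omega
  refine ⟨fun | 0 => k + 1 | 1 => k | _ + 2 => 0,
    fun | 0 => Fin.cons d₀ d | 1 => fun i => d i + 1 | _ + 2 => Fin.elim0,
    Fin.cons g₀ g,
    fun | 0 => syzygyMatrix w (fun i => X (a i)) | _ + 1 => 0,
    ⟨rfl, ?_, ?_, ?_, ?_, ?_, ?_⟩, ?_, hk⟩
  · intro r
    induction r using Fin.cases with
    | zero => exact hg₀
    | succ i => exact hg i
  · intro r
    induction r using Fin.cases with
    | zero => exact hg₀.constantCoeff_eq_zero hd₀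
    | succ i => exact (hg i).constantCoeff_eq_zero (hd i)
  · rintro (_ | j) r i
    · exact isHomogeneous_syzygyMatrix hw hdeg r i
    · exact i.elim0
  · rintro (_ | j) r i hle
    · exact syzygyMatrix_eq_zero_of_le hlt hle
    · exact i.elim0
  · exact ker_linearCombination_cons_eq_range_syzygyMatrix hg₀_ne (fun _ => X_prime) hsyz hndvd
      hdvd₀ hdvd
  · rintro (_ | j)
    · simp only [Matrix.mulVecLin_zero, LinearMap.range_zero]
      exact ker_syzygyMatrix_mulVecLin_eq_bot fun _ => X_ne_zero _
    · exact Subsingleton.elim _ _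
  · rintro (_ | _ | j) hj
    · omega
    · omega
    · rfl

end Graded

section Monomials

lemma MvPolynomial.X_dvd_prod_X_iff {σ R : Type*} [CommRing R] [IsDomain R] {v : σ}
    {S : Finset σ} : (X v : MvPolynomial σ R) ∣ ∏ u ∈ S, X u ↔ v ∈ S := by
  refine ⟨fun h => ?_, fun h => Finset.dvd_prod_of_mem _ h⟩
  obtain ⟨u, hu, hvu⟩ := X_prime.exists_mem_finset_dvd h
  rwa [X_dvd_X.mp hvu]

lemma MvPolynomial.isHomogeneous_prod_X {σ R : Type*} [CommSemiring R] (S : Finset σ) :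
    (∏ u ∈ S, X u : MvPolynomial σ R).IsHomogeneous S.card := by
  simpa using IsHomogeneous.prod S X (fun _ => 1) fun i _ => isHomogeneous_X R i

variable {K : Type*} [Field K] {n : ℕ}

theorem coverIdeal_eq_span_prod_X (G : SimpleGraph (Fin n)) (𝒮 : Set (Finset (Fin n)))
    (h𝒮 : ∀ C : Finset (Fin n), IsVertexCover G C ↔ ∃ S ∈ 𝒮, S ⊆ C) :
    coverIdeal K G = Ideal.span ((fun S => ∏ v ∈ S, X v) '' 𝒮) := by
  apply le_antisymm
  · rw [coverIdeal, Ideal.span_le]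
    rintro _ ⟨C, hC, rfl⟩
    obtain ⟨S, hS, hSC⟩ := (h𝒮 C).1 hC
    exact Ideal.mem_of_dvd _ (Finset.prod_dvd_prod_of_subset _ _ _ hSC)
      (Ideal.subset_span ⟨S, hS, rfl⟩)
  · rw [Ideal.span_le]
    rintro _ ⟨S, hS, rfl⟩
    exact Ideal.subset_span ⟨S, (h𝒮 S).2 ⟨S, hS, subset_rfl⟩, rfl⟩

/-- The relations `X a * X^(A \ {a} ∪ L a) = X^(A \ A₀ ∪ L a) * X^A₀` are a basis of the
syzygies. -/
theorem hasMinimalResolutionOfLengthTwo_span_prod_X {A A₀ : Finset (Fin n)}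
    {L : Fin n → Finset (Fin n)} (hA₀ : A₀ ⊆ A) (hA₀_ne : A₀.Nonempty)
    (hL : ∀ a, Disjoint A (L a)) (hw : ∀ a ∈ A₀, (A \ A₀ ∪ L a).Nonempty) :
    HasMinimalResolutionOfLengthTwo (K := K)
      (Ideal.span ((fun S => ∏ v ∈ S, X v) '' insert A₀ ((fun a => A.erase a ∪ L a) '' A₀))) := by
  set σ : Fin A₀.card → Fin n := fun i => A₀.equivFin.symm i
  have hσ : ∀ i, σ i ∈ A₀ := fun i => (A₀.equivFin.symm i).2
  have hσ_inj : σ.Injective := Subtype.val_injective.comp A₀.equivFin.symm.injective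
  have hσ_range : Set.range σ = A₀ := by
    ext v
    refine ⟨fun ⟨i, hi⟩ => hi ▸ hσ i, fun hv => ⟨A₀.equivFin ⟨v, hv⟩, by simp [σ]⟩⟩
  have hσ_notMem : ∀ i, σ i ∉ A.erase (σ i) ∪ L (σ i) := fun i => by
    simpa using fun h => Finset.disjoint_left.mp (hL (σ i)) (hA₀ (hσ i)) h
  have hgens : (fun S => ∏ v ∈ S, X v) '' insert A₀ ((fun a => A.erase a ∪ L a) '' A₀) =
      Set.range (Fin.cons (∏ v ∈ A₀, X v) fun i => ∏ v ∈ A.erase (σ i) ∪ L (σ i), X v :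
        Fin (A₀.card + 1) → MvPolynomial (Fin n) K) := by
    rw [Fin.range_cons, Set.image_insert_eq, Set.image_image, ← hσ_range, ← Set.range_comp]
    rfl
  rw [hgens]
  refine hasMinimalResolutionOfLengthTwo_of_syzygies (a := σ)
    (w := fun i => ∏ v ∈ A \ A₀ ∪ L (σ i), X v) hA₀_ne.card_pos.ne' hA₀_ne.card_pos.ne'
    (isHomogeneous_prod_X _) (Finset.prod_ne_zero_iff.mpr fun _ _ => X_ne_zero _)
    (fun _ => isHomogeneous_prod_X _) (fun _ => isHomogeneous_prod_X _)
    (fun i => (hw _ (hσ i)).card_pos.ne') (fun i => ?_)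
    (fun i => X_dvd_prod_X_iff.not.2 (hσ_notMem i))
    (fun i => X_dvd_prod_X_iff.2 (hσ i)) (fun i j hij => X_dvd_prod_X_iff.2 ?_)
  · have hdisj : Disjoint (A \ A₀ ∪ L (σ i)) A₀ :=
      Finset.disjoint_union_left.2 ⟨Finset.sdiff_disjoint, (hL _).symm.mono_right hA₀⟩
    rw [← Finset.prod_insert (hσ_notMem i), ← Finset.prod_union hdisj, ← Finset.insert_union,
      Finset.insert_erase (hA₀ (hσ i)), Finset.union_right_comm, Finset.sdiff_union_of_subset hA₀]
  · exact Finset.mem_union_left _ (Finset.mem_erase.2 ⟨hσ_inj.ne hij, hA₀ (hσ i)⟩)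

end Monomials

namespace StarClique

variable {n : ℕ} {A : Finset (Fin n)} {f : Fin n → Fin n} {H : SimpleGraph (Fin n)}

def leaves (A : Finset (Fin n)) (f : Fin n → Fin n) (a : Fin n) : Finset (Fin n) :=
  {v | v ∉ A ∧ f v = a}

lemma mem_leaves {a v : Fin n} : v ∈ leaves A f a ↔ v ∉ A ∧ f v = a := by
  simp [leaves]

lemma disjoint_leaves (A : Finset (Fin n)) (f : Fin n → Fin n) (a : Fin n) :
    Disjoint A (leaves A f a) :=
  Finset.disjoint_left.2 fun _ hv hv' => (mem_leaves.1 hv').1 hv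

variable (hH : ∀ u v : Fin n, H.Adj u v ↔
  (u ∈ A ∧ v ∈ A ∧ u ≠ v) ∨ (u ∉ A ∧ v = f u) ∨ (v ∉ A ∧ u = f v))
include hH

lemma adj_iff_of_mem {a u : Fin n} (ha : a ∈ A) :
    H.Adj a u ↔ u ∈ A.erase a ∪ leaves A f a := by
  rw [hH, Finset.mem_union, Finset.mem_erase, mem_leaves]
  grind

lemma mem_or_mem_of_adj (hf : ∀ v : Fin n, v ∉ A → f v ∈ A) {u v : Fin n} (h : H.Adj u v) :
    u ∈ A ∨ v ∈ A := by
  rcases (hH u v).1 h with ⟨hu, -⟩ | ⟨hu, rfl⟩ | ⟨hv, rfl⟩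
  · exact .inl hu
  · exact .inr (hf u hu)
  · exact .inl (hf v hv)

theorem isVertexCover_iff (hf : ∀ v : Fin n, v ∉ A → f v ∈ A) (C : Finset (Fin n)) :
    IsVertexCover H C ↔ A ⊆ C ∨ ∃ a ∈ A, A.erase a ∪ leaves A f a ⊆ C := by
  constructor
  · rw [or_iff_not_imp_left]
    intro hC hAC
    obtain ⟨a, haA, haC⟩ := Finset.not_subset.1 hAC
    exact ⟨a, haA, fun u hu => (hC ((adj_iff_of_mem hH haA).2 hu)).resolve_left haC⟩
  · rintro (hAC | ⟨a, haA, haC⟩) u v huv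
    · exact (mem_or_mem_of_adj hH hf huv).imp (@hAC u) (@hAC v)
    by_cases hu : u = a
    · subst hu
      exact .inr (haC ((adj_iff_of_mem hH haA).1 huv))
    by_cases hv : v = a
    · subst hv
      exact .inl (haC ((adj_iff_of_mem hH haA).1 huv.symm))
    refine (mem_or_mem_of_adj hH hf huv).imp (fun h => ?_) (fun h => ?_)
    · exact haC (Finset.mem_union_left _ (Finset.mem_erase.2 ⟨hu, h⟩))
    · exact haC (Finset.mem_union_left _ (Finset.mem_erase.2 ⟨hv, h⟩))

/-- `A₀` is `A`, or `A` minus a centre without leaves; then `X^A₀` and the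
`X^(A \ {a} ∪ leaves a)`, `a ∈ A₀`, are the minimal generators of the cover ideal. -/
theorem exists_subset_isVertexCover_iff (hf : ∀ v : Fin n, v ∉ A → f v ∈ A) {v : Fin n}
    (hv : v ∉ A) :
    ∃ A₀ ⊆ A, A₀.Nonempty ∧ (∀ a ∈ A₀, (A \ A₀ ∪ leaves A f a).Nonempty) ∧
      ∀ C : Finset (Fin n), IsVertexCover H C ↔
        ∃ S ∈ insert A₀ ((fun a => A.erase a ∪ leaves A f a) '' A₀), S ⊆ C := by
  simp only [isVertexCover_iff hH hf, Set.exists_mem_insert, Set.exists_mem_image,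
    Finset.mem_coe]
  by_cases hB : ∃ b ∈ A, leaves A f b = ∅
  · obtain ⟨b, hb, hLb⟩ := hB
    have hfv : f v ≠ b := fun h => by
      simpa [hLb] using (mem_leaves (A := A) (f := f)).2 ⟨hv, h⟩
    refine ⟨A.erase b, Finset.erase_subset _ _, ⟨f v, Finset.mem_erase.2 ⟨hfv, hf v hv⟩⟩,
      fun a _ => ⟨b, by simp [hb]⟩, fun C => ⟨?_, ?_⟩⟩
    · rintro (hAC | ⟨a, haA, haC⟩)
      · exact .inl ((Finset.erase_subset _ _).trans hAC)
      by_cases hab : a = b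
      · subst hab
        exact .inl (by simpa [hLb] using haC)
      · exact .inr ⟨a, Finset.mem_erase.2 ⟨hab, haA⟩, haC⟩
    · rintro (hAC | ⟨a, haA, haC⟩)
      · exact .inr ⟨b, hb, by simpa [hLb] using hAC⟩
      · exact .inr ⟨a, Finset.mem_of_mem_erase haA, haC⟩
  · push Not at hB
    exact ⟨A, subset_rfl, ⟨f v, hf v hv⟩,
      fun a ha => by simpa using hB a ha, fun C => Iff.rfl⟩

end StarClique

/-- For the graph `H` (complete graph on `A`, `|A| = m < n`, with stars centered at the
vertices of `A`, the leaves being exactly the vertices outside `A`), the projective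
dimension of `R/I_c(H)` equals `2`: the minimal graded free resolution
`⋯ → F₂ → F₁ → R → R/I_c(H) → 0` has `F_j = 0` for `j > 2` and `F₂ ≠ 0`
(recall `F_{j+1}` has rank `rk j`). -/
theorem projdim_quotient_coverIdeal
    (n m : ℕ) (hmn : m < n) (K : Type*) [Field K]
    (A : Finset (Fin n)) (hA : A.card = m)
    (f : Fin n → Fin n) (hf : ∀ v : Fin n, v ∉ A → f v ∈ A)
    (H : SimpleGraph (Fin n))
    (hH : ∀ u v : Fin n, H.Adj u v ↔
      (u ∈ A ∧ v ∈ A ∧ u ≠ v) ∨ (u ∉ A ∧ v = f u) ∨ (v ∉ A ∧ u = f v)) :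
    ∃ (rk : ℕ → ℕ) (dgr : ∀ j : ℕ, Fin (rk j) → ℕ)
      (g : Fin (rk 0) → MvPolynomial (Fin n) K)
      (M : ∀ j : ℕ, Matrix (Fin (rk j)) (Fin (rk (j + 1))) (MvPolynomial (Fin n) K)),
      IsMinimalGradedFreeResolution (coverIdeal K H) rk dgr g M ∧
      (∀ j : ℕ, 2 ≤ j → rk j = 0) ∧ rk 1 ≠ 0 := by
  obtain ⟨v, -, hv⟩ := Finset.exists_mem_notMem_of_card_lt_card
    (by simpa [hA] using hmn : A.card < (Finset.univ : Finset (Fin n)).card)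
  obtain ⟨A₀, hA₀, hA₀_ne, hw, hcover⟩ := StarClique.exists_subset_isVertexCover_iff hH hf hv
  rw [coverIdeal_eq_span_prod_X H _ hcover]
  exact hasMinimalResolutionOfLengthTwo_span_prod_X hA₀ hA₀_ne (StarClique.disjoint_leaves A f) hw
end
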